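/- arXiv:1012.4242 — 4 statements merged into one kernel-verified Lean document; each statement's English description precedes it below -/
import Mathlib

section
/- Let F be a homogeneous cubic polynomial in variables x_0,...,x_3 over the complex numbers, and let a = (a_0,...,a_3) with F(a) = 0. Then the determinant of the 4×4 bordered matrix whose (0,0)-entry is 0, whose first row and first column (apart from the corner) are (∂F/∂x_1(a), ∂F/∂x_2(a), ∂F/∂x_3(a)), and whose lower-right 3×3 block is (∂²F/∂x_i∂x_j(a))_{1≤i,j≤3}, equals (a_0²/4) times the determinant of the full 4×4 Hessian matrix (∂²F/∂x_i∂x_j(a))_{0≤i,j≤3}. -/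
open MvPolynomial Matrix

/-! Write `H` for the Hessian and `g` for the gradient of `F` at `a`. By Euler's identity for the
quadrics `∂ⱼF`, `a ᵥ* H = 2 g`, so replacing row `0` of `H` by `g` multiplies the determinant by
`a₀ / 2`. Since `H` is symmetric, `H *ᵥ a = 2 g` as well, and the new matrix sends `a` to `2 g`
except in the corner, where it gives `g ⬝ᵥ a = 3 F(a) = 0`; replacing column `0` by that vector
yields the bordered matrix and another factor `a₀ / 2`. -/

namespace Matrix

variable {R ι : Type*} [CommRing R] [Fintype ι] [DecidableEq ι]

theorem det_updateRow_vecMul (A : Matrix ι ι R) (k : ι) (v : ι → R) :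
    (A.updateRow k (v ᵥ* A)).det = v k * A.det := by
  simpa [vecMul_eq_sum] using det_updateRow_sum A k v

theorem det_updateCol_mulVec (A : Matrix ι ι R) (k : ι) (v : ι → R) :
    (A.updateCol k (A *ᵥ v)).det = v k * A.det := by
  have hcomb : A *ᵥ v = fun i => ∑ j, v j • A i j := by
    ext; simp [mulVec, dotProduct, mul_comm]
  simpa [hcomb] using det_updateCol_sum A k v

end Matrix

namespace MvPolynomial

variable {R σ : Type*}

theorem pderiv_pderiv_comm [CommSemiring R] (i j : σ) (p : MvPolynomial σ R) :
    pderiv i (pderiv j p) = pderiv j (pderiv i p) := by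
  classical
  induction p using MvPolynomial.induction_on with
  | C c => simp
  | add p q hp hq => simp [hp, hq]
  | mul_X p k hp =>
      simp only [pderiv_mul, map_add, hp, pderiv_X, Pi.single_apply]
      split_ifs <;> simp [add_right_comm]

theorem sum_mul_eval_pderiv [CommSemiring R] [Fintype σ] {F : MvPolynomial σ R} {n : ℕ}
    (hF : F.IsHomogeneous n) (a : σ → R) :
    ∑ i, a i * eval a (pderiv i F) = n * eval a F := by
  simpa [nsmul_eq_mul] using congrArg (eval a) hF.sum_X_mul_pderiv

noncomputable section Hessian

variable [CommRing R]

def hessianAt (F : MvPolynomial σ R) (a : σ → R) : Matrix σ σ R :=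
  Matrix.of fun i j => eval a (pderiv i (pderiv j F))

def gradientAt (F : MvPolynomial σ R) (a : σ → R) : σ → R :=
  fun i => eval a (pderiv i F)

def borderedHessianAt [DecidableEq σ] (k : σ) (F : MvPolynomial σ R) (a : σ → R) :
    Matrix σ σ R :=
  ((hessianAt F a).updateRow k (gradientAt F a)).updateCol k
    (Function.update (gradientAt F a) k 0)

variable {F : MvPolynomial σ R} {n : ℕ}

theorem hessianAt_transpose (a : σ → R) : (hessianAt F a)ᵀ = hessianAt F a := by
  ext i j
  exact congrArg (eval a) (pderiv_pderiv_comm j i F)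

variable [Fintype σ]

theorem vecMul_hessianAt (hF : F.IsHomogeneous (n + 1)) (a : σ → R) :
    a ᵥ* hessianAt F a = (n : R) • gradientAt F a := by
  ext j
  simpa [hessianAt, gradientAt, vecMul, dotProduct] using
    sum_mul_eval_pderiv (hF.pderiv (i := j)) a

theorem hessianAt_mulVec (hF : F.IsHomogeneous (n + 1)) (a : σ → R) :
    hessianAt F a *ᵥ a = (n : R) • gradientAt F a := by
  rw [← vecMul_transpose, hessianAt_transpose, vecMul_hessianAt hF]

theorem gradientAt_dotProduct (hF : F.IsHomogeneous n) (a : σ → R) :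
    gradientAt F a ⬝ᵥ a = n * eval a F := by
  simpa [gradientAt, dotProduct, mul_comm] using sum_mul_eval_pderiv hF a

variable [DecidableEq σ]

theorem sq_mul_det_hessianAt (k : σ) (hF : F.IsHomogeneous (n + 1)) {a : σ → R}
    (ha : eval a F = 0) :
    a k ^ 2 * (hessianAt F a).det = (n : R) ^ 2 * (borderedHessianAt k F a).det := by
  set M := (hessianAt F a).updateRow k (gradientAt F a)
  have hrow : a k * (hessianAt F a).det = n * M.det := by
    rw [← det_updateRow_vecMul, vecMul_hessianAt hF, det_updateRow_smul]
  have hM : M *ᵥ a = (n : R) • Function.update (gradientAt F a) k 0 := by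
    ext i
    rcases eq_or_ne i k with rfl | hi
    · simp [M, mulVec, gradientAt_dotProduct hF, ha]
    · simpa [M, mulVec, hi] using congrFun (hessianAt_mulVec hF a) i
  have hcol : a k * M.det = n * (borderedHessianAt k F a).det := by
    rw [← det_updateCol_mulVec, hM, det_updateCol_smul]
    rfl
  linear_combination a k * hrow + n * hcol

end Hessian

end MvPolynomial

/-- bordered Hessian identity for a cubic form at a point of the surface. -/
theorem bordered_hessian_det (F : MvPolynomial (Fin 4) ℂ)
    (hF : F.IsHomogeneous 3) (a : Fin 4 → ℂ) (ha : eval a F = 0) :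
    (Matrix.of fun i j : Fin 4 =>
      if i = 0 ∧ j = 0 then 0
      else if i = 0 then eval a (pderiv j F)
      else if j = 0 then eval a (pderiv i F)
      else eval a (pderiv i (pderiv j F))).det
    = (a 0) ^ 2 / 4 *
      (Matrix.of fun i j : Fin 4 => eval a (pderiv i (pderiv j F))).det := by
  have hB : (Matrix.of fun i j : Fin 4 =>
      if i = 0 ∧ j = 0 then 0
      else if i = 0 then eval a (pderiv j F)
      else if j = 0 then eval a (pderiv i F)
      else eval a (pderiv i (pderiv j F))) = borderedHessianAt 0 F a := by
    ext i j
    by_cases hi : i = 0 <;> by_cases hj : j = 0 <;>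
      simp [borderedHessianAt, hessianAt, gradientAt, updateRow_apply, hi, hj]
  have hH : (Matrix.of fun i j : Fin 4 => eval a (pderiv i (pderiv j F))) = hessianAt F a := rfl
  rw [hB, hH]
  linear_combination -sq_mul_det_hessianAt (n := 2) 0 hF ha / 4
end

section
/- Let F(x_0,...,x_3) ∈ ℂ[x_0,...,x_3] be a cubic form defining a surface X ⊂ ℙ³, and let V ⊂ ℙ⁴ be the cubic threefold defined by F(x_0,...,x_3) + x_4³. Let L ⊂ ℙ⁴ be a line contained in V that is not contained in the hyperplane {x_4 = 0}, meeting that hyperplane in the point [a_0:...:a_3:0] and containing a point [b_0:...:b_3:1]. Then [a_0:...:a_3] ≠ [b_0:...:b_3] (so ρ(L) = {[a_0 t_0 + b_0 t_1 : ... : a_3 t_0 + b_3 t_1]} is a line in ℙ³), and F(a_0 t_0 + b_0 t_1, ..., a_3 t_0 + b_3 t_1) = -t_1³ identically, i.e., the image line meets X only at [a_0:...:a_3], with multiplicity 3. -/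
open MvPolynomial

/-- If `b = c • a`, the parameters `(0, 0)` and `(-c, 1)` both give the origin, where `G + t₁³`
would take the values `G 0` and `G 0 + 1`. -/
theorem not_exists_eq_smul_of_eval_line_add_cube_eq_zero {ι R : Type*} [CommRing R]
    [Nontrivial R] (G : (ι → R) → R) (a b : ι → R)
    (hG : ∀ t0 t1 : R, G (fun i => a i * t0 + b i * t1) + t1 ^ 3 = 0) :
    ¬ ∃ c : R, b = fun i => c * a i := by
  rintro ⟨c, rfl⟩
  have h_origin : ∀ t0 t1 : R, t0 = -c * t1 → (fun i => a i * t0 + c * a i * t1) = 0 := by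
    rintro t0 t1 rfl
    funext i
    simp only [Pi.zero_apply]
    ring
  have h0 := hG 0 0
  have h1 := hG (-c) 1
  rw [h_origin 0 0 (by ring)] at h0
  rw [h_origin (-c) 1 (by ring)] at h1
  exact one_ne_zero (by linear_combination h1 - h0)

theorem line_on_triple_cover_projects_general (F : MvPolynomial (Fin 4) ℂ)
    (a b : Fin 4 → ℂ)
    (hL : ∀ t0 t1 : ℂ, eval (fun i => a i * t0 + b i * t1) F + t1 ^ 3 = 0) :
    (¬ ∃ c : ℂ, b = fun i => c * a i) ∧
    (∀ t0 t1 : ℂ, eval (fun i => a i * t0 + b i * t1) F = -t1 ^ 3) :=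
  ⟨not_exists_eq_smul_of_eval_line_add_cube_eq_zero (fun x => eval x F) a b hL,
    fun t0 t1 => eq_neg_of_add_eq_zero_left (hL t0 t1)⟩

/-- a line on the cubic threefold `{F + x₄³ = 0}` not contained in
`{x₄ = 0}`, through `[a:0]` and `[b:1]`, projects to a line of `ℙ³` meeting the
cubic surface `{F = 0}` only at `[a]`, with multiplicity 3. -/
theorem line_on_triple_cover_projects (F : MvPolynomial (Fin 4) ℂ)
    (hF : F.IsHomogeneous 3) (a b : Fin 4 → ℂ) (ha : a ≠ 0)
    (hL : ∀ t0 t1 : ℂ, eval (fun i => a i * t0 + b i * t1) F + t1 ^ 3 = 0) :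
    (¬ ∃ c : ℂ, b = fun i => c * a i) ∧
    (∀ t0 t1 : ℂ, eval (fun i => a i * t0 + b i * t1) F = -t1 ^ 3) :=
  line_on_triple_cover_projects_general F a b hL
end

section
/- In the ring R = ℤ[s,t]/(t⁴, s⁴ + s³t + s²t² + st³ + t⁴), with the degree map normalized so that deg(s²t³) = 1, one has deg((3s)² · (6s²t + 15st² + 6t³)) = -81. -/
section DegreeFiveMonomials

variable {R : Type*} [CommRing R] {s t : R}

theorem cube_mul_sq_eq_neg_sq_mul_cube (h1 : t ^ 4 = 0)
    (h3 : s ^ 3 + s ^ 2 * t + s * t ^ 2 + t ^ 3 = 0) :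
    s ^ 3 * t ^ 2 = -(s ^ 2 * t ^ 3) := by
  linear_combination t ^ 2 * h3 - (s + t) * h1

theorem pow_four_mul_eq_zero (h1 : t ^ 4 = 0)
    (h3 : s ^ 3 + s ^ 2 * t + s * t ^ 2 + t ^ 3 = 0) :
    s ^ 4 * t = 0 := by
  linear_combination s * t * h3 - cube_mul_sq_eq_neg_sq_mul_cube h1 h3 - s * h1

end DegreeFiveMonomials

theorem chow_degree_Yinf_squared_general (R : Type*) [CommRing R] (s t : R)
    (h1 : t ^ 4 = 0)
    (h3 : s ^ 3 + s ^ 2 * t + s * t ^ 2 + t ^ 3 = 0) :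
    (3 * s) ^ 2 * (6 * s ^ 2 * t + 15 * s * t ^ 2 + 6 * t ^ 3)
      = -81 * (s ^ 2 * t ^ 3) := by
  -- the left side expands to 54 s⁴t + 135 s³t² + 54 s²t³
  linear_combination 54 * pow_four_mul_eq_zero h1 h3 + 135 * cube_mul_sq_eq_neg_sq_mul_cube h1 h3

/-- in the Chow ring of the flag variety `Γ(ℙ³)`
(`ℤ[s,t]` modulo the relations `t⁴ = 0` and `s³+s²t+st²+t³ = 0`, whence also
`s⁴+s³t+s²t²+st³+t⁴ = 0`), the degree of `(3s)²·(6s²t+15st²+6t³)`, i.e. its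
expression as a multiple of the point class `s²t³`, is `-81`. -/
theorem chow_degree_Yinf_squared (R : Type*) [CommRing R] (s t : R)
    (h1 : t ^ 4 = 0)
    (h2 : s ^ 4 + s ^ 3 * t + s ^ 2 * t ^ 2 + s * t ^ 3 + t ^ 4 = 0)
    (h3 : s ^ 3 + s ^ 2 * t + s * t ^ 2 + t ^ 3 = 0) :
    (3 * s) ^ 2 * (6 * s ^ 2 * t + 15 * s * t ^ 2 + 6 * t ^ 3)
      = -81 * (s ^ 2 * t ^ 3) :=
  chow_degree_Yinf_squared_general R s t h1 h3
end

section
/- Let V be a 4-dimensional vector space over ℂ with basis x_0,...,x_3 and dual basis x_0^∨,...,x_3^∨, and let F ∈ Sym³V define a nonsingular cubic surface (i.e., F and its partials have no common zero in ℙ³). Then the map ν : V^∨ ⊗ V → Sym³V defined by x_i^∨ ⊗ A ↦ A·∂F/∂x_i is injective. -/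
/-!
The relation `∑ M i j X_j ∂_i F = 0` says that the linear vector field `x ↦ M x` kills `F`.
Its commutator with the constant vector field `∂_a` is `∂_(M a)`, so the trilinear form
`T(a, b, c) = ∂_a ∂_b ∂_c F`, a constant since `F` is a cubic, satisfies
`T(M a, b, c) + T(a, M b, c) + T(a, b, M c) = 0`. By Euler's identity `T(v, v, c) = 2 ∂_c F(v)`,
so nonsingularity says that `T(v, v, ·)` vanishes only for `v = 0`.

If `M v = μ v` with `v ≠ 0`, then `T(v, v, M c) = -2μ T(v, v, c)`, so `-2μ` is an eigenvalue as
well; as the spectrum is finite, it is `{0}` and `M` is nilpotent. If `M ^ (k + 1) = 0` but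
`M ^ k v ≠ 0` with `k ≥ 1`, the Leibniz expansion of `T(M^i v, M^j v, c)` over `i + j = 2k` leaves
only the middle term, so `T(M^k v, M^k v, ·) = 0`, a contradiction.
-/

open MvPolynomial Finset
open scoped Matrix

theorem Set.Finite.eq_zero_of_neg_two_mul_mem {K : Type*} [Field K] [CharZero K] {s : Set K}
    (hs : s.Finite) (h : ∀ x ∈ s, -2 * x ∈ s) {x : K} (hx : x ∈ s) : x = 0 := by
  by_contra hx0
  refine hs.not_infinite (Set.infinite_of_injective_forall_mem (f := fun n : ℕ => (-2 : K) ^ n * x)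
    (fun m n hmn => ?_) fun n => ?_)
  · have : (((-2 : ℤ) ^ m : ℤ) : K) = ((-2 : ℤ) ^ n : ℤ) := by
      push_cast
      exact mul_right_cancel₀ hx0 hmn
    exact Int.pow_right_injective (by decide) (Int.cast_injective this)
  · induction n with
    | zero => simpa
    | succ n ih => simpa [pow_succ', mul_assoc] using h _ ih

theorem Module.End.isNilpotent_of_spectrum_subset_zero {K V : Type*} [Field K] [IsAlgClosed K]
    [AddCommGroup V] [Module K V] [FiniteDimensional K V] (f : Module.End K V)
    (h : spectrum K f ⊆ {0}) : IsNilpotent f := by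
  rw [LinearMap.isNilpotent_iff_charpoly]
  have hsplit := IsAlgClosed.splits f.charpoly
  have hroots : f.charpoly.roots = Multiset.replicate (Module.finrank K V) 0 := by
    refine Multiset.eq_replicate.mpr ⟨?_, fun μ hμ => h ?_⟩
    · rw [← hsplit.natDegree_eq_card_roots, f.charpoly_natDegree]
    · exact (f.mem_spectrum_iff_isRoot_charpoly μ).mpr (Polynomial.isRoot_of_mem_roots hμ)
  rw [hsplit.eq_prod_roots_of_monic f.charpoly_monic, hroots]
  simp

section CommRing

variable {R V W : Type*} [CommRing R] [AddCommGroup V] [Module R V] [AddCommGroup W] [Module R W]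

def IsInfinitesimalAutomorphism (T : V →ₗ[R] V →ₗ[R] V →ₗ[R] W) (f : Module.End R V) : Prop :=
  ∀ a b c, T (f a) b c + T a (f b) c + T a b (f c) = 0

theorem IsInfinitesimalAutomorphism.sum_antidiagonal_choose_smul
    {T : V →ₗ[R] V →ₗ[R] V →ₗ[R] W} {f : Module.End R V} (hf : IsInfinitesimalAutomorphism T f)
    (n : ℕ) (a b c : V) :
    ∑ ij ∈ antidiagonal n, n.choose ij.1 • T ((f ^ ij.1) a) ((f ^ ij.2) b) c =
      (-1 : R) ^ n • T a b ((f ^ n) c) := by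
  induction n generalizing a b with
  | zero => simp
  | succ n ih =>
    calc _ = ∑ ij ∈ antidiagonal n, n.choose ij.1 • T ((f ^ ij.1) a) ((f ^ ij.2) (f b)) c +
          ∑ ij ∈ antidiagonal n, n.choose ij.1 • T ((f ^ ij.1) (f a)) ((f ^ ij.2) b) c := by
          rw [sum_antidiagonal_choose_succ_nsmul (fun i j => T ((f ^ i) a) ((f ^ j) b) c)]
          simp only [pow_succ, Module.End.mul_apply]
          congr 1
          refine sum_congr rfl fun ij hij => ?_
          rw [Nat.choose_symm_of_eq_add (HasAntidiagonal.mem_antidiagonal.mp hij).symm]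
      _ = (-1 : R) ^ n • (T a (f b) ((f ^ n) c) + T (f a) b ((f ^ n) c)) := by
          rw [ih, ih, smul_add]
      _ = (-1 : R) ^ (n + 1) • T a b ((f ^ (n + 1)) c) := by
          rw [pow_succ' f, Module.End.mul_apply]
          linear_combination (norm := module) (-1 : R) ^ n • hf a b ((f ^ n) c)

end CommRing

namespace IsInfinitesimalAutomorphism

variable {K V W : Type*} [Field K] [AddCommGroup V] [Module K V] [AddCommGroup W] [Module K W]
  {T : V →ₗ[K] V →ₗ[K] V →ₗ[K] W} {f : Module.End K V}

theorem eq_zero_of_isNilpotent [CharZero K] (hf : IsInfinitesimalAutomorphism T f)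
    (hT : ∀ v, T v v = 0 → v = 0) (hnil : IsNilpotent f) : f = 0 := by
  by_contra hf0
  have : Nontrivial (Module.End K V) := ⟨⟨f, 0, hf0⟩⟩
  obtain ⟨k, hk⟩ := Nat.exists_eq_add_one.mpr (pos_nilpotencyClass_iff.mpr hnil)
  obtain ⟨hk1, hk0⟩ := nilpotencyClass_eq_succ_iff.mp hk
  have hk_pos : k ≠ 0 := by
    rintro rfl
    exact hf0 (nilpotencyClass_eq_one.mp hk)
  obtain ⟨v, hv⟩ : ∃ v, (f ^ k) v ≠ 0 := not_forall.mp fun h => hk0 (LinearMap.ext h)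
  refine hv (hT _ (LinearMap.ext fun c => ?_))
  have hchain := hf.sum_antidiagonal_choose_smul (2 * k) v v c
  rw [pow_eq_zero_of_le (by omega) hk1, LinearMap.zero_apply, map_zero, smul_zero,
    sum_eq_single (k, k)] at hchain
  · rw [← Nat.cast_smul_eq_nsmul K, smul_eq_zero] at hchain
    exact hchain.resolve_left (Nat.cast_ne_zero.mpr (Nat.choose_pos (by omega)).ne')
  · rintro ⟨i, j⟩ hij hne
    rw [HasAntidiagonal.mem_antidiagonal] at hij
    obtain hi | hj : k < i ∨ k < j := by
      by_contra! h
      exact hne (Prod.ext (by omega) (by omega))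
    · simp [pow_eq_zero_of_le hi hk1]
    · simp [pow_eq_zero_of_le hj hk1]
  · simp [two_mul]

theorem neg_two_mul_mem_spectrum [FiniteDimensional K V] (hf : IsInfinitesimalAutomorphism T f)
    (hT : ∀ v, T v v = 0 → v = 0) {μ : K} (hμ : μ ∈ spectrum K f) : -2 * μ ∈ spectrum K f := by
  obtain ⟨v, hv⟩ := (Module.End.hasEigenvalue_iff_mem_spectrum.mpr hμ).exists_hasEigenvector
  have hφ : ∀ c, T v v (f c) = (-2 * μ) • T v v c := fun c => by
    have := hf v v c
    rw [hv.apply_eq_smul] at this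
    simp only [map_smul, LinearMap.smul_apply] at this
    linear_combination (norm := module) this
  rw [spectrum.mem_iff]
  intro hunit
  refine hv.2 (hT v (LinearMap.ext fun c => ?_))
  obtain ⟨d, rfl⟩ := ((Module.End.isUnit_iff _).mp hunit).surjective c
  rw [LinearMap.zero_apply, LinearMap.sub_apply, map_sub, Module.algebraMap_end_apply, map_smul,
    hφ, sub_self]

theorem eq_zero [CharZero K] [IsAlgClosed K] [FiniteDimensional K V]
    (hf : IsInfinitesimalAutomorphism T f) (hT : ∀ v, T v v = 0 → v = 0) : f = 0 :=
  hf.eq_zero_of_isNilpotent hT <| f.isNilpotent_of_spectrum_subset_zero fun _ hμ =>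
    f.finite_spectrum.eq_zero_of_neg_two_mul_mem (fun _ hx => hf.neg_two_mul_mem_spectrum hT hx) hμ

end IsInfinitesimalAutomorphism

theorem Derivation.sum_apply {R A M ι : Type*} [CommSemiring R] [CommSemiring A] [Algebra R A]
    [AddCommMonoid M] [Module A M] [Module R M] (s : Finset ι) (D : ι → Derivation R A M) (p : A) :
    (∑ i ∈ s, D i) p = ∑ i ∈ s, D i p :=
  (congrFun (map_sum Derivation.coeFnAddMonoidHom D s) p).trans (Finset.sum_apply p s _)

namespace MvPolynomial

variable {σ R : Type*} [CommRing R]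

theorem IsHomogeneous.derivation_eq_zero {p : MvPolynomial σ R} (hp : p.IsHomogeneous 0)
    (D : Derivation R (MvPolynomial σ R) (MvPolynomial σ R)) : D p = 0 := by
  rw [totalDegree_eq_zero_iff_eq_C.mp ((totalDegree_zero_iff_isHomogeneous σ).mpr hp)]
  exact D.map_algebraMap _

variable [Fintype σ]

noncomputable def dirDeriv : (σ → R) →ₗ[R] Derivation R (MvPolynomial σ R) (MvPolynomial σ R) where
  toFun a := ∑ i, a i • pderiv i
  map_add' a b := by simp [add_smul, sum_add_distrib]
  map_smul' r a := by simp [smul_sum, smul_smul]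

noncomputable def linearVectorField (M : Matrix σ σ R) :
    Derivation R (MvPolynomial σ R) (MvPolynomial σ R) :=
  ∑ i, (∑ j, M i j • X j : MvPolynomial σ R) • pderiv i

theorem dirDeriv_apply (a : σ → R) (p : MvPolynomial σ R) :
    dirDeriv a p = ∑ i, a i • pderiv i p := by
  simp [dirDeriv, Derivation.sum_apply]

theorem linearVectorField_apply (M : Matrix σ σ R) (p : MvPolynomial σ R) :
    linearVectorField M p = ∑ i, ∑ j, C (M i j) * X j * pderiv i p := by
  simp [linearVectorField, Derivation.sum_apply, sum_mul, smul_eq_C_mul]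

theorem dirDeriv_X (a : σ → R) (j : σ) : dirDeriv a (X j) = C (a j) := by
  classical
  simp [dirDeriv_apply, pderiv_X, Pi.single_apply, smul_eq_C_mul]

theorem linearVectorField_X (M : Matrix σ σ R) (i : σ) :
    linearVectorField M (X i) = ∑ j, M i j • X j := by
  classical
  simp [linearVectorField, Derivation.sum_apply, pderiv_X, Pi.single_apply]

theorem dirDeriv_commutator_linearVectorField (a : σ → R) (M : Matrix σ σ R) :
    ⁅dirDeriv a, linearVectorField M⁆ = dirDeriv (M *ᵥ a) := by
  refine derivation_ext fun i => ?_
  simp [Derivation.commutator_apply, linearVectorField_X, dirDeriv_X, Matrix.mulVec, dotProduct,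
    smul_eq_C_mul]

theorem IsHomogeneous.dirDeriv {n : ℕ} {p : MvPolynomial σ R} (hp : p.IsHomogeneous n)
    (a : σ → R) : (MvPolynomial.dirDeriv a p).IsHomogeneous (n - 1) := by
  rw [dirDeriv_apply]
  exact IsHomogeneous.sum _ _ _ fun i _ => by
    rw [smul_eq_C_mul]; exact hp.pderiv.C_mul _

theorem eval_dirDeriv (v a : σ → R) (p : MvPolynomial σ R) :
    eval v (dirDeriv a p) = ∑ i, a i * eval v (pderiv i p) := by
  simp [dirDeriv_apply]

theorem IsHomogeneous.eval_dirDeriv_self {n : ℕ} {p : MvPolynomial σ R}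
    (hp : p.IsHomogeneous n) (v : σ → R) :
    eval v (MvPolynomial.dirDeriv v p) = n * eval v p := by
  simpa [eval_dirDeriv] using congrArg (eval v) hp.sum_X_mul_pderiv

noncomputable def thirdDeriv (F : MvPolynomial σ R) :
    (σ → R) →ₗ[R] (σ → R) →ₗ[R] (σ → R) →ₗ[R] MvPolynomial σ R where
  toFun a := LinearMap.mk₂ R (fun b c => dirDeriv a (dirDeriv b (dirDeriv c F)))
    (by simp) (by simp) (by simp) (by simp)
  map_add' a a' := by ext; simp
  map_smul' r a := by ext; simp

@[simp]
theorem thirdDeriv_apply (F : MvPolynomial σ R) (a b c : σ → R) :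
    thirdDeriv F a b c = dirDeriv a (dirDeriv b (dirDeriv c F)) :=
  rfl

theorem IsHomogeneous.eval_thirdDeriv_self_self {F : MvPolynomial σ R} (hF : F.IsHomogeneous 3)
    (v c : σ → R) : eval v (thirdDeriv F v v c) = 2 * eval v (MvPolynomial.dirDeriv c F) := by
  rw [thirdDeriv_apply, ((hF.dirDeriv c).dirDeriv v).eval_dirDeriv_self,
    (hF.dirDeriv c).eval_dirDeriv_self]
  norm_num

theorem IsHomogeneous.isInfinitesimalAutomorphism_thirdDeriv [DecidableEq σ]
    {F : MvPolynomial σ R} (hF : F.IsHomogeneous 3) {M : Matrix σ σ R}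
    (hM : linearVectorField M F = 0) :
    IsInfinitesimalAutomorphism (thirdDeriv F) (Matrix.toLin' M) := by
  intro a b c
  set E := linearVectorField M
  have hE (a : σ → R) (p : MvPolynomial σ R) :
      E (MvPolynomial.dirDeriv a p) =
        MvPolynomial.dirDeriv a (E p) - MvPolynomial.dirDeriv (M *ᵥ a) p := by
    rw [← dirDeriv_commutator_linearVectorField, Derivation.commutator_apply, sub_sub_cancel]
  have hconst := (((hF.dirDeriv c).dirDeriv b).dirDeriv a).derivation_eq_zero E
  rw [hE, hE, hE, hM] at hconst
  simp only [map_zero, map_sub, map_neg, zero_sub] at hconst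
  simp only [thirdDeriv_apply, Matrix.toLin'_apply]
  linear_combination -hconst

end MvPolynomial

/-- An element of `V^∨ ⊗ V` is written as the matrix `M` of `∑ M i j · x_i^∨ ⊗ x_j`. -/
theorem nu_injective (F : MvPolynomial (Fin 4) ℂ) (hF : F.IsHomogeneous 3)
    (hns : ∀ a : Fin 4 → ℂ, (∀ i : Fin 4, eval a (pderiv i F) = 0) → a = 0)
    (M : Matrix (Fin 4) (Fin 4) ℂ)
    (hM : (∑ i : Fin 4, ∑ j : Fin 4, C (M i j) * X j * pderiv i F) = 0) :
    M = 0 := by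
  have hT : ∀ v, thirdDeriv F v v = 0 → v = 0 := fun v hv => hns v fun i => by
    simpa [hv, eval_dirDeriv, Pi.single_apply] using hF.eval_thirdDeriv_self_self v (Pi.single i 1)
  have hinv : IsInfinitesimalAutomorphism (thirdDeriv F) (Matrix.toLin' M) :=
    hF.isInfinitesimalAutomorphism_thirdDeriv (by rwa [linearVectorField_apply])
  exact Matrix.toLin'.map_eq_zero_iff.mp (hinv.eq_zero hT)
end
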